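/- Let d₁ ≥ 1, let J be a finite index set, let Σ ∈ ℝ^{d₁×d₁} be a real symmetric matrix with entries σ_{qr}, and let B be a real array indexed by pairs in ([d₁]×J) × ([d₁]×J) with operator norm ‖B‖ as a linear map on ℝ^{[d₁]×J}. Define the array M indexed by J×J by m_{uv} = (1/d₁) Σ_{u₁,v₁=1}^{d₁} σ_{u₁ v₁} b_{(u₁,u),(v₁,v)}. Then the operator norm of M as a linear map on ℝ^J satisfies ‖M‖ ≤ ‖B‖ ‖Σ‖. -/

import Mathlib

/-!
Write `e_v` for the standard basis vectors of `ℝ^{d₁}` and `a ⊗ b` for the vector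
`(a_i b_u)_{(i,u)}`, so that `‖a ⊗ b‖ = ‖a‖ ‖b‖`. Summing over `u₁` first gives the identity
`⟨M x, y⟩ = d₁⁻¹ ∑_v ⟨B (e_v ⊗ x), (Σ e_v) ⊗ y⟩`. Each of the `d₁` terms is at most
`‖B‖ ‖Σ e_v‖ ‖x‖ ‖y‖ ≤ ‖B‖ ‖Σ‖ ‖x‖ ‖y‖`, and the factor `d₁⁻¹` cancels the number of terms.
-/

/-- The ℓ²→ℓ² operator norm of a real matrix. -/
noncomputable def opNorm {I : Type*} [Fintype I] [DecidableEq I] (A : Matrix I I ℝ) : ℝ :=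
  ‖LinearMap.toContinuousLinearMap (Matrix.toEuclideanLin A)‖

open Matrix
open scoped InnerProductSpace

section

variable {I J : Type*} [Fintype I] [Fintype J]

noncomputable def EuclideanSpace.kronecker {𝕜 : Type*} [RCLike 𝕜]
    (a : EuclideanSpace 𝕜 I) (b : EuclideanSpace 𝕜 J) : EuclideanSpace 𝕜 (I × J) :=
  WithLp.toLp 2 fun p => a p.1 * b p.2

theorem EuclideanSpace.norm_kronecker {𝕜 : Type*} [RCLike 𝕜]
    (a : EuclideanSpace 𝕜 I) (b : EuclideanSpace 𝕜 J) :
    ‖EuclideanSpace.kronecker a b‖ = ‖a‖ * ‖b‖ := by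
  rw [EuclideanSpace.norm_eq, EuclideanSpace.norm_eq, EuclideanSpace.norm_eq,
    ← Real.sqrt_mul (by positivity), Fintype.sum_prod_type, Finset.sum_mul_sum]
  simp [EuclideanSpace.kronecker, mul_pow]

theorem opNorm_nonneg [DecidableEq I] (A : Matrix I I ℝ) : 0 ≤ opNorm A :=
  norm_nonneg _

theorem opNorm_smul [DecidableEq I] (c : ℝ) (A : Matrix I I ℝ) :
    opNorm (c • A) = |c| * opNorm A := by
  simp only [opNorm, map_smul, norm_smul, Real.norm_eq_abs]

theorem norm_toEuclideanLin_single_le [DecidableEq I] (S : Matrix I I ℝ) (v : I) :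
    ‖toEuclideanLin S (EuclideanSpace.single v 1)‖ ≤ opNorm S := by
  have h := (toEuclideanLin S).toContinuousLinearMap.le_opNorm (EuclideanSpace.single v 1)
  rwa [PiLp.norm_single, norm_one, mul_one] at h

def partialContraction (S : Matrix I I ℝ) (B : Matrix (I × J) (I × J) ℝ) : Matrix J J ℝ :=
  of fun u v => ∑ u₁, ∑ v₁, S u₁ v₁ * B (u₁, u) (v₁, v)

theorem inner_toEuclideanLin_partialContraction [DecidableEq I] [DecidableEq J]
    (S : Matrix I I ℝ) (B : Matrix (I × J) (I × J) ℝ) (x y : EuclideanSpace ℝ J) :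
    ⟪toEuclideanLin (partialContraction S B) x, y⟫_ℝ =
      ∑ v, ⟪toEuclideanLin B (EuclideanSpace.kronecker (EuclideanSpace.single v 1) x),
        EuclideanSpace.kronecker (toEuclideanLin S (EuclideanSpace.single v 1)) y⟫_ℝ := by
  simp only [PiLp.inner_apply, RCLike.inner_apply, conj_trivial, EuclideanSpace.kronecker,
    partialContraction, toLpLin_apply, mulVec, dotProduct, of_apply, Fintype.sum_prod_type,
    Finset.mul_sum, Finset.sum_mul, PiLp.single_apply, ite_mul, mul_ite, one_mul, zero_mul,
    mul_one, mul_zero, Finset.sum_ite_irrel, Finset.sum_const_zero, Finset.sum_ite_eq',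
    Finset.mem_univ, if_true]
  conv_rhs => rw [Finset.sum_comm_cycle]
  refine Finset.sum_congr rfl fun u _ => ?_
  conv_rhs => rw [Finset.sum_comm_cycle]
  refine Finset.sum_congr rfl fun w _ => ?_
  rw [Finset.sum_comm]
  exact Finset.sum_congr rfl fun b _ => Finset.sum_congr rfl fun a _ => by ring

theorem opNorm_partialContraction_le [DecidableEq I] [DecidableEq J]
    (S : Matrix I I ℝ) (B : Matrix (I × J) (I × J) ℝ) :
    opNorm (partialContraction S B) ≤ Fintype.card I * (opNorm B * opNorm S) := by
  refine ContinuousLinearMap.opNorm_le_of_re_inner_le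
    (mul_nonneg (Nat.cast_nonneg _) (mul_nonneg (opNorm_nonneg B) (opNorm_nonneg S)))
    fun x y hx hy => ?_
  change ⟪toEuclideanLin (partialContraction S B) x, y⟫_ℝ ≤ _
  rw [inner_toEuclideanLin_partialContraction]
  calc _ ≤ ∑ _v : I, opNorm B * opNorm S := Finset.sum_le_sum fun v _ => ?_
    _ = _ := by simp
  set e := EuclideanSpace.single v (1 : ℝ)
  calc _ ≤ ‖toEuclideanLin B (EuclideanSpace.kronecker e x)‖ *
        ‖EuclideanSpace.kronecker (toEuclideanLin S e) y‖ := real_inner_le_norm _ _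
    _ ≤ opNorm B * ‖EuclideanSpace.kronecker e x‖ *
        ‖EuclideanSpace.kronecker (toEuclideanLin S e) y‖ := by
      gcongr
      exact (toEuclideanLin B).toContinuousLinearMap.le_opNorm _
    _ = opNorm B * ‖toEuclideanLin S e‖ := by
      simp [EuclideanSpace.norm_kronecker, e, hx, hy]
    _ ≤ opNorm B * opNorm S := by
      gcongr
      · exact opNorm_nonneg B
      · exact norm_toEuclideanLin_single_le S v

end

theorem stmt_13_general (d₁ : ℕ) (J : Type*) [Fintype J] [DecidableEq J]
    (S : Matrix (Fin d₁) (Fin d₁) ℝ)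
    (B : Matrix (Fin d₁ × J) (Fin d₁ × J) ℝ)
    (M : Matrix J J ℝ)
    (hM : ∀ u v, M u v = (d₁ : ℝ)⁻¹ * ∑ u₁, ∑ v₁, S u₁ v₁ * B (u₁, u) (v₁, v)) :
    opNorm M ≤ opNorm B * opNorm S := by
  have hM' : M = (d₁ : ℝ)⁻¹ • partialContraction S B := by
    ext u v
    simp [hM, partialContraction]
  calc opNorm M = (d₁ : ℝ)⁻¹ * opNorm (partialContraction S B) := by
        rw [hM', opNorm_smul, abs_of_nonneg (by positivity)]
    _ ≤ (d₁ : ℝ)⁻¹ * (d₁ * (opNorm B * opNorm S)) := by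
        gcongr
        simpa using opNorm_partialContraction_le S B
    _ ≤ opNorm B * opNorm S := by
        rw [← mul_assoc]
        exact mul_le_of_le_one_left (mul_nonneg (opNorm_nonneg B) (opNorm_nonneg S)) inv_mul_le_one

/-- partial contraction of an array `B` indexed by `([d₁]×J)²` against a
symmetric matrix `Σ` (normalized by `1/d₁`) has operator norm at most `‖B‖ ‖Σ‖`. -/
theorem stmt_13 (d₁ : ℕ) (hd : 1 ≤ d₁) (J : Type*) [Fintype J] [DecidableEq J]
    (S : Matrix (Fin d₁) (Fin d₁) ℝ) (hS : S.IsSymm)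
    (B : Matrix (Fin d₁ × J) (Fin d₁ × J) ℝ)
    (M : Matrix J J ℝ)
    (hM : ∀ u v, M u v = (d₁ : ℝ)⁻¹ * ∑ u₁, ∑ v₁, S u₁ v₁ * B (u₁, u) (v₁, v)) :
    opNorm M ≤ opNorm B * opNorm S :=
  stmt_13_general d₁ J S B M hM
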